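/- Let k be a commutative ring and let Γ = A * B be the free product of two groups A and B. Then the homomorphism of left kΓ-modules kI_A^Γ ⊕ kI_B^Γ → kI_Γ defined by (x, y) ↦ x + y is an isomorphism. -/

import Mathlib

/-- The augmentation homomorphism `kG → k`, sending every group element to `1`. -/
noncomputable def augHom (k : Type*) [CommRing k] (G : Type*) [Group G] :
    MonoidAlgebra k G →ₐ[k] k :=
  MonoidAlgebra.lift k k G 1

/-- The augmentation ideal `kI_G`: the kernel of the augmentation map `kG → k`. -/
noncomputable def augIdeal (k : Type*) [CommRing k] (G : Type*) [Group G] :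
    Ideal (MonoidAlgebra k G) :=
  RingHom.ker (augHom k G)

/-- `kI_Λ^Γ` for `Λ` (the image of) a subgroup given by a subset `s` of `Γ`: the left
ideal of `kΓ` generated by the elements `λ - 1` for `λ ∈ s`. -/
noncomputable def relAugIdeal (k : Type*) [CommRing k] {G : Type*} [Group G] (s : Set G) :
    Ideal (MonoidAlgebra k G) :=
  Ideal.span ((fun g => (MonoidAlgebra.of k G g : MonoidAlgebra k G) - 1) '' s)

/-!
Since `gh - 1 = g(h - 1) + (g - 1)` and `Γ` is generated by `A` and `B`, every `g - 1` lies in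
`kI_A^Γ + kI_B^Γ`, and these elements span `kI_Γ`.

For directness, the universal property of `A ∗ B` glues the crossed homomorphisms `a ↦ a - 1` on `A`
and `b ↦ 0` on `B` (with `Γ` acting on `kΓ` by left multiplication) into a crossed homomorphism
`d : Γ → kΓ`. Its `k`-linear extension `D : kΓ → kΓ` satisfies `D(x(g - 1)) = x d(g)`, so `D` is the
identity on `kI_A^Γ` and vanishes on `kI_B^Γ`.
-/

open Monoid.Coprod MonoidAlgebra

section CrossedHom

variable {G R : Type*} [Monoid G] [Ring R]

/-- Crossed homomorphisms (1-cocycles) for the left action of `G` on `R` through `ρ`. -/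
def IsCrossedHom (ρ : G →* R) (d : G → R) : Prop :=
  ∀ g h, d (g * h) = ρ g * d h + d g

variable {ρ : G →* R} {d : G → R}

lemma IsCrossedHom.apply_one (hd : IsCrossedHom ρ d) : d 1 = 0 := by
  simpa using hd 1 1

lemma upperTriangular_mul (a b a' b' : R) :
    !![a, b; 0, 1] * !![a', b'; 0, 1] = !![a * a', a * b' + b; 0, 1] := by
  simp

def IsCrossedHom.toMatrixHom (hd : IsCrossedHom ρ d) : G →* Matrix (Fin 2) (Fin 2) R where
  toFun g := !![ρ g, d g; 0, 1]
  map_one' := by rw [ρ.map_one, hd.apply_one, Matrix.one_fin_two]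
  map_mul' g h := by rw [upperTriangular_mul, map_mul, hd]

end CrossedHom

theorem Monoid.Coprod.exists_isCrossedHom {M N R : Type*} [Monoid M] [Monoid N] [Ring R]
    (ρ : M ∗ N →* R) {dM : M → R} {dN : N → R} (hM : IsCrossedHom (ρ.comp inl) dM)
    (hN : IsCrossedHom (ρ.comp inr) dN) :
    ∃ d, IsCrossedHom ρ d ∧ (∀ m, d (inl m) = dM m) ∧ ∀ n, d (inr n) = dN n := by
  set F := lift hM.toMatrixHom hN.toMatrixHom
  have hF (g : M ∗ N) : ∃ c, F g = !![ρ g, c; 0, 1] := by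
    induction g using Monoid.Coprod.induction_on with
    | inl m => exact ⟨dM m, rfl⟩
    | inr n => exact ⟨dN n, rfl⟩
    | mul x y hx hy =>
      obtain ⟨c, hc⟩ := hx
      obtain ⟨c', hc'⟩ := hy
      exact ⟨_, by rw [map_mul, hc, hc', upperTriangular_mul, map_mul]⟩
  refine ⟨fun g => F g 0 1, fun g h => ?_, fun m => rfl, fun n => rfl⟩
  obtain ⟨c, hc⟩ := hF g
  obtain ⟨c', hc'⟩ := hF h
  show F (g * h) 0 1 = ρ g * F h 0 1 + F g 0 1
  rw [map_mul, hc, hc', upperTriangular_mul]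
  rfl

section GroupAlgebra

variable {k G : Type*} [CommRing k] [Group G]

lemma relAugIdeal_le_augIdeal (s : Set G) : relAugIdeal k s ≤ augIdeal k G := by
  rw [relAugIdeal, Ideal.span_le]
  rintro _ ⟨g, -, rfl⟩
  simp [augIdeal, augHom]

lemma relAugIdeal_union (s t : Set G) :
    relAugIdeal k (s ∪ t) = relAugIdeal k s ⊔ relAugIdeal k t := by
  rw [relAugIdeal, Set.image_union, Ideal.span_union, relAugIdeal, relAugIdeal]

lemma of_sub_one_mem_relAugIdeal {s : Set G} {g : G} (hg : g ∈ Submonoid.closure s) :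
    of k G g - 1 ∈ relAugIdeal k s := by
  induction hg using Submonoid.closure_induction with
  | mem g hg => exact Ideal.subset_span ⟨g, hg, rfl⟩
  | one => rw [map_one, sub_self]; exact zero_mem _
  | mul g h _ _ hg hh =>
    have : of k G (g * h) - 1 = of k G g * (of k G h - 1) + (of k G g - 1) := by
      rw [map_mul, mul_sub, mul_one, sub_add_sub_cancel]
    rw [this]
    exact add_mem (Ideal.mul_mem_left _ _ hh) hg

lemma augIdeal_le_relAugIdeal {s : Set G} (hs : Submonoid.closure s = ⊤) :
    augIdeal k G ≤ relAugIdeal k s := by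
  suffices ∀ w, w - algebraMap k _ (augHom k G w) ∈ relAugIdeal k s by
    intro w hw
    simpa [RingHom.mem_ker.mp hw] using this w
  intro w
  induction w using MonoidAlgebra.induction_on with
  | of g =>
    have hg : augHom k G (of k G g) = 1 := by simp [augHom]
    rw [hg, map_one]
    exact of_sub_one_mem_relAugIdeal (hs ▸ Submonoid.mem_top g)
  | add v w hv hw =>
    rw [map_add, map_add, add_sub_add_comm]
    exact add_mem hv hw
  | smul c w hw =>
    rw [map_smul, smul_eq_mul, map_mul, ← Algebra.smul_def, ← smul_sub]
    exact Submodule.smul_of_tower_mem _ c hw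

lemma IsCrossedHom.constr_mul_of_sub_one {d : G → MonoidAlgebra k G}
    (hd : IsCrossedHom (of k G) d) (x : MonoidAlgebra k G) (g : G) :
    (basis G k).constr k d (x * (of k G g - 1)) = x * d g := by
  induction x using MonoidAlgebra.induction_on with
  | of h =>
    have hconstr (g : G) : (basis G k).constr k d (of k G g) = d g := by
      rw [of_apply, ← basis_apply, Module.Basis.constr_basis]
    rw [mul_sub, mul_one, ← map_mul, map_sub, hconstr, hconstr, hd, add_sub_cancel_right]
  | add v w hv hw => rw [add_mul, map_add, hv, hw, add_mul]
  | smul c w hw => rw [smul_mul_assoc, map_smul, hw, smul_mul_assoc]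

lemma LinearMap.eqOn_relAugIdeal {M : Type*} [AddCommGroup M] [Module k M]
    {f f' : MonoidAlgebra k G →ₗ[k] M} {s : Set G}
    (h : ∀ x, ∀ g ∈ s, f (x * (of k G g - 1)) = f' (x * (of k G g - 1))) :
    ∀ y ∈ relAugIdeal k s, f y = f' y := by
  suffices ∀ y ∈ relAugIdeal k s, ∀ x, f (x * y) = f' (x * y) by
    simpa using fun y hy => this y hy 1
  intro y hy
  induction hy using Submodule.span_induction with
  | mem _ hy =>
    obtain ⟨g, hg, rfl⟩ := hy
    exact fun x => h x g hg
  | zero => simp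
  | add u v _ _ hu hv => simp [mul_add, hu, hv]
  | smul c u _ hu => simpa [← mul_assoc] using fun x => hu (x * c)

end GroupAlgebra

namespace Monoid.Coprod

variable (k : Type*) [CommRing k] (A B : Type*) [Group A] [Group B]

lemma augIdeal_eq_sup :
    augIdeal k (A ∗ B) =
      relAugIdeal k (Set.range (inl : A →* A ∗ B)) ⊔ relAugIdeal k (Set.range (inr : B →* A ∗ B)) :=
  le_antisymm
    (by
      rw [← relAugIdeal_union]
      exact augIdeal_le_relAugIdeal mclosure_range_inl_union_inr)
    (sup_le (relAugIdeal_le_augIdeal _) (relAugIdeal_le_augIdeal _))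

lemma exists_projection_relAugIdeal_inl :
    ∃ D : MonoidAlgebra k (A ∗ B) →ₗ[k] MonoidAlgebra k (A ∗ B),
      (∀ x ∈ relAugIdeal k (Set.range (inl : A →* A ∗ B)), D x = x) ∧
      ∀ y ∈ relAugIdeal k (Set.range (inr : B →* A ∗ B)), D y = 0 := by
  have hA : IsCrossedHom ((of k (A ∗ B)).comp inl) fun a => of k (A ∗ B) (inl a) - 1 := by
    intro a a'
    simp only [MonoidHom.comp_apply, map_mul]
    noncomm_ring
  have hB : IsCrossedHom ((of k (A ∗ B)).comp inr) fun _ => 0 := fun _ _ => by simp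
  obtain ⟨d, hd, hdA, hdB⟩ := exists_isCrossedHom _ hA hB
  refine ⟨(MonoidAlgebra.basis _ k).constr k d, ?_, ?_⟩
  · refine LinearMap.eqOn_relAugIdeal (f' := LinearMap.id) ?_
    rintro x _ ⟨a, rfl⟩
    rw [hd.constr_mul_of_sub_one, hdA, LinearMap.id_apply]
  · refine LinearMap.eqOn_relAugIdeal (f' := 0) ?_
    rintro x _ ⟨b, rfl⟩
    rw [hd.constr_mul_of_sub_one, hdB, mul_zero, LinearMap.zero_apply]

end Monoid.Coprod

/-- For a free product `Γ = A ∗ B`, the map `kI_A^Γ ⊕ kI_B^Γ → kI_Γ`, `(x, y) ↦ x + y`,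
is an isomorphism (stated elementwise: it lands in `kI_Γ`, is injective and
surjective). -/
theorem freeProduct_augmentationIdeal_decomposition
    (k : Type) [CommRing k] (A B : Type) [Group A] [Group B] :
    (relAugIdeal k (Set.range fun a : A => (Monoid.Coprod.inl a : Monoid.Coprod A B)) ≤
        augIdeal k (Monoid.Coprod A B)) ∧
    (relAugIdeal k (Set.range fun b : B => (Monoid.Coprod.inr b : Monoid.Coprod A B)) ≤
        augIdeal k (Monoid.Coprod A B)) ∧
    (∀ x ∈ relAugIdeal k
        (Set.range fun a : A => (Monoid.Coprod.inl a : Monoid.Coprod A B)),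
      ∀ y ∈ relAugIdeal k
        (Set.range fun b : B => (Monoid.Coprod.inr b : Monoid.Coprod A B)),
        x + y = 0 → x = 0 ∧ y = 0) ∧
    (∀ w ∈ augIdeal k (Monoid.Coprod A B),
      ∃ x ∈ relAugIdeal k
        (Set.range fun a : A => (Monoid.Coprod.inl a : Monoid.Coprod A B)),
      ∃ y ∈ relAugIdeal k
        (Set.range fun b : B => (Monoid.Coprod.inr b : Monoid.Coprod A B)),
        x + y = w) := by
  obtain ⟨D, hDA, hDB⟩ := exists_projection_relAugIdeal_inl k A B
  refine ⟨relAugIdeal_le_augIdeal _, relAugIdeal_le_augIdeal _, fun x hx y hy hxy => ?_,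
    fun w hw => Submodule.mem_sup.mp (augIdeal_eq_sup k A B ▸ hw)⟩
  have hx : x = 0 := by
    simpa [hDA x hx, hDB y hy] using congrArg D hxy
  exact ⟨hx, by simpa [hx] using hxy⟩
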